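/- arXiv:2509.14444 — 4 statements merged into one kernel-verified Lean document; each statement's English description precedes it below -/
import Mathlib

section
/- A feasible masked transport plan for (p, q, (A_j)) exists if and only if for every subset I ⊆ {1,…,N} it holds that ∑_{j ∈ S(I)} q_j ≤ ∑_{i ∈ I} p_i ≤ ∑_{j ∈ N(I)} q_j, where N(I) = {j ∈ {1,…,M} : A_j ∩ I ≠ ∅} and S(I) = {j ∈ {1,…,M} : A_j ⊆ I}. -/
open Finset

/-- `T` is a feasible masked transport plan for `(p, q, A)`:
nonnegative entries, zero outside the mask, row sums `p`, column sums `q`. -/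
def IsFeasiblePlan {N M : ℕ} (p : Fin N → ℝ) (q : Fin M → ℝ)
    (A : Fin M → Finset (Fin N)) (T : Fin N → Fin M → ℝ) : Prop :=
  (∀ i j, 0 ≤ T i j) ∧ (∀ i j, i ∉ A j → T i j = 0) ∧
    (∀ i, ∑ j, T i j = p i) ∧ (∀ j, ∑ i, T i j = q j)

/-- A plan restricted to row set `R` and column set `C`. -/
def PlanOn {N M : ℕ} (A : Fin M → Finset (Fin N)) (R : Finset (Fin N)) (C : Finset (Fin M))
    (p : Fin N → ℝ) (q : Fin M → ℝ) : Prop :=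
  ∃ T : Fin N → Fin M → ℝ,
    (∀ i j, 0 ≤ T i j) ∧ (∀ i j, i ∉ A j → T i j = 0) ∧ (∀ i j, i ∉ R → T i j = 0) ∧
    (∀ i j, j ∉ C → T i j = 0) ∧ (∀ i ∈ R, ∑ j, T i j = p i) ∧ (∀ j ∈ C, ∑ i, T i j = q j)

/-- The hypotheses of the restricted feasibility problem. -/
def Hyps {N M : ℕ} (A : Fin M → Finset (Fin N)) (R : Finset (Fin N)) (C : Finset (Fin M))
    (p : Fin N → ℝ) (q : Fin M → ℝ) : Prop :=
  (∀ j ∈ C, (A j ∩ R).Nonempty) ∧ (∀ i, 0 ≤ p i) ∧ (∀ j, 0 ≤ q j) ∧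
    (∑ i ∈ R, p i = ∑ j ∈ C, q j) ∧
    ∀ I ⊆ R, (∑ j ∈ C.filter (fun j => A j ∩ R ⊆ I), q j) ≤ ∑ i ∈ I, p i

lemma split_lemma {N M : ℕ} (A : Fin M → Finset (Fin N)) (R : Finset (Fin N))
    (C : Finset (Fin M)) (p : Fin N → ℝ) (q : Fin M → ℝ)
    (h : Hyps A R C p q)
    (IH : ∀ (R' : Finset (Fin N)) (C' : Finset (Fin M)) (p' : Fin N → ℝ) (q' : Fin M → ℝ),
      R'.card + C'.card < R.card + C.card → Hyps A R' C' p' q' → PlanOn A R' C' p' q')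
    (I : Finset (Fin N)) (hIR : I ⊆ R) (hIne : I.Nonempty) (hInR : I ≠ R)
    (htight : ∑ j ∈ C.filter (fun j => A j ∩ R ⊆ I), q j = ∑ i ∈ I, p i) :
    PlanOn A R C p q := by
  obtain ⟨hA, hp, hq, htot, hL⟩ := h
  set D := C.filter (fun j => A j ∩ R ⊆ I) with hD
  have hDC : D ⊆ C := filter_subset _ _
  have hDmem : ∀ j, j ∈ D ↔ j ∈ C ∧ A j ∩ R ⊆ I := by
    intro j; simp [hD, mem_filter]
  -- Sub1 hypotheses
  have h1 : Hyps A I D p q := by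
    refine ⟨?_, hp, hq, htight.symm, ?_⟩
    · intro j hj
      rw [hDmem] at hj
      refine (hA j hj.1).mono ?_
      intro x hx
      rcases mem_inter.1 hx with ⟨h1, h2⟩
      exact mem_inter.2 ⟨h1, hj.2 hx⟩
    · intro I' hI'
      have hfe : D.filter (fun j => A j ∩ I ⊆ I') = C.filter (fun j => A j ∩ R ⊆ I') := by
        ext j
        simp only [mem_filter, hDmem]
        constructor
        · rintro ⟨⟨hjC, hsub⟩, hsub2⟩
          refine ⟨hjC, fun x hx => hsub2 ?_⟩
          exact mem_inter.2 ⟨(mem_inter.1 hx).1, hsub hx⟩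
        · rintro ⟨hjC, hsub⟩
          refine ⟨⟨hjC, fun x hx => hI' (hsub hx)⟩, fun x hx => ?_⟩
          rcases mem_inter.1 hx with ⟨ha, hi⟩
          exact hsub (mem_inter.2 ⟨ha, hIR hi⟩)
      rw [hfe]
      exact hL I' (hI'.trans hIR)
  -- Sub2 hypotheses
  have hsplitset : ∀ I' ⊆ R \ I,
      C.filter (fun j => A j ∩ R ⊆ I ∪ I')
        = D ∪ (C \ D).filter (fun j => A j ∩ (R \ I) ⊆ I') := by
    intro I' hI'
    ext j
    simp only [mem_filter, mem_union, mem_sdiff, hDmem]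
    constructor
    · rintro ⟨hjC, hsub⟩
      by_cases hcase : A j ∩ R ⊆ I
      · exact Or.inl ⟨hjC, hcase⟩
      · refine Or.inr ⟨⟨hjC, fun hc => hcase hc.2⟩, fun x hx => ?_⟩
        rcases mem_inter.1 hx with ⟨ha, hri⟩
        rcases mem_sdiff.1 hri with ⟨hr, hni⟩
        rcases mem_union.1 (hsub (mem_inter.2 ⟨ha, hr⟩)) with h | h
        · exact absurd h hni
        · exact h
    · rintro (⟨hjC, hsub⟩ | ⟨⟨hjC, _⟩, hsub⟩)
      · exact ⟨hjC, fun x hx => mem_union.2 (Or.inl (hsub hx))⟩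
      · refine ⟨hjC, fun x hx => ?_⟩
        rcases mem_inter.1 hx with ⟨ha, hr⟩
        by_cases hxi : x ∈ I
        · exact mem_union.2 (Or.inl hxi)
        · exact mem_union.2 (Or.inr (hsub (mem_inter.2 ⟨ha, mem_sdiff.2 ⟨hr, hxi⟩⟩)))
  have h2 : Hyps A (R \ I) (C \ D) p q := by
    refine ⟨?_, hp, hq, ?_, ?_⟩
    · intro j hj
      rcases mem_sdiff.1 hj with ⟨hjC, hjD⟩
      have : ¬ (A j ∩ R ⊆ I) := fun hc => hjD ((hDmem j).2 ⟨hjC, hc⟩)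
      rcases not_subset.1 this with ⟨x, hx, hxI⟩
      rcases mem_inter.1 hx with ⟨ha, hr⟩
      exact ⟨x, mem_inter.2 ⟨ha, mem_sdiff.2 ⟨hr, hxI⟩⟩⟩
    · have e1 : ∑ i ∈ R \ I, p i = ∑ i ∈ R, p i - ∑ i ∈ I, p i := by
        rw [eq_sub_iff_add_eq, Finset.sum_sdiff hIR]
      have e2 : ∑ j ∈ C \ D, q j = ∑ j ∈ C, q j - ∑ j ∈ D, q j := by
        rw [eq_sub_iff_add_eq, Finset.sum_sdiff hDC]
      rw [e1, e2, htot]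
      linarith [htight]
    · intro I' hI'
      have hkey := hL (I ∪ I') (union_subset hIR (hI'.trans (sdiff_subset)))
      rw [hsplitset I' hI'] at hkey
      have hdisj : Disjoint D ((C \ D).filter (fun j => A j ∩ (R \ I) ⊆ I')) := by
        refine disjoint_left.2 fun j hj hj2 => ?_
        exact (mem_sdiff.1 (mem_filter.1 hj2).1).2 hj
      rw [Finset.sum_union hdisj] at hkey
      have hdisj2 : Disjoint I I' := by
        refine disjoint_left.2 fun x hx hx2 => ?_
        exact (mem_sdiff.1 (hI' hx2)).2 hx
      rw [Finset.sum_union hdisj2] at hkey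
      linarith [htight]
  -- cardinalities
  have hIcard : I.card < R.card := card_lt_card (hIR.ssubset_of_ne hInR)
  have hc1 : I.card + D.card < R.card + C.card := by
    have := card_le_card hDC; omega
  have hc2 : (R \ I).card + (C \ D).card < R.card + C.card := by
    have h1 : (R \ I).card = R.card - I.card := card_sdiff_of_subset hIR
    have h2 : (C \ D).card ≤ C.card := card_le_card (sdiff_subset)
    have h3 : 0 < I.card := card_pos.2 hIne
    omega
  obtain ⟨T₁, hT₁0, hT₁A, hT₁R, hT₁C, hT₁row, hT₁col⟩ := IH I D p q hc1 h1
  obtain ⟨T₂, hT₂0, hT₂A, hT₂R, hT₂C, hT₂row, hT₂col⟩ := IH (R \ I) (C \ D) p q hc2 h2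
  refine ⟨fun i j => T₁ i j + T₂ i j, ?_, ?_, ?_, ?_, ?_, ?_⟩
  · intro i j; exact add_nonneg (hT₁0 i j) (hT₂0 i j)
  · intro i j hij; show T₁ i j + T₂ i j = 0; rw [hT₁A i j hij, hT₂A i j hij, add_zero]
  · intro i j hij
    show T₁ i j + T₂ i j = 0
    rw [hT₁R i j (fun hc => hij (hIR hc)), hT₂R i j (fun hc => hij (mem_sdiff.1 hc).1),
      add_zero]
  · intro i j hij
    show T₁ i j + T₂ i j = 0
    rw [hT₁C i j (fun hc => hij (hDC hc)), hT₂C i j (fun hc => hij (mem_sdiff.1 hc).1),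
      add_zero]
  · intro i hi
    rw [Finset.sum_add_distrib]
    by_cases hiI : i ∈ I
    · rw [hT₁row i hiI, Finset.sum_eq_zero (fun j _ => hT₂R i j
        (fun hc => (mem_sdiff.1 hc).2 hiI)), add_zero]
    · rw [hT₂row i (mem_sdiff.2 ⟨hi, hiI⟩), Finset.sum_eq_zero
        (fun j _ => hT₁R i j hiI), zero_add]
  · intro j hj
    rw [Finset.sum_add_distrib]
    by_cases hjD : j ∈ D
    · rw [hT₁col j hjD, Finset.sum_eq_zero (fun i _ => hT₂C i j
        (fun hc => (mem_sdiff.1 hc).2 hjD)), add_zero]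
    · rw [hT₂col j (mem_sdiff.2 ⟨hj, hjD⟩), Finset.sum_eq_zero
        (fun i _ => hT₁C i j hjD), zero_add]

lemma exists_plan_aux {N M : ℕ} (A : Fin M → Finset (Fin N)) (n : ℕ)
    (R : Finset (Fin N)) (C : Finset (Fin M)) (p : Fin N → ℝ) (q : Fin M → ℝ)
    (hn : (R.card + C.card) * (N + M + 1) + (R.filter (fun i => p i ≠ 0)).card
        + (C.filter (fun j => q j ≠ 0)).card ≤ n)
    (h : Hyps A R C p q) : PlanOn A R C p q := by
  induction n using Nat.strong_induction_on generalizing R C p q with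
  | _ n IH =>
  obtain ⟨hA, hp, hq, htot, hL⟩ := id h
  -- convenient forms of the induction hypothesis
  have IH2 : ∀ (R' : Finset (Fin N)) (C' : Finset (Fin M)) (p' : Fin N → ℝ) (q' : Fin M → ℝ),
      (R'.card + C'.card) * (N + M + 1) + (R'.filter (fun i => p' i ≠ 0)).card
        + (C'.filter (fun j => q' j ≠ 0)).card < n →
      Hyps A R' C' p' q' → PlanOn A R' C' p' q' := by
    intro R' C' p' q' hlt hh
    exact IH _ hlt R' C' p' q' le_rfl hh
  have hNcard : ∀ (R' : Finset (Fin N)), R'.card ≤ N := by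
    intro R'; simpa using card_le_univ R'
  have hMcard : ∀ (C' : Finset (Fin M)), C'.card ≤ M := by
    intro C'; simpa using card_le_univ C'
  have IH3 : ∀ (R' : Finset (Fin N)) (C' : Finset (Fin M)) (p' : Fin N → ℝ) (q' : Fin M → ℝ),
      R'.card + C'.card < R.card + C.card → Hyps A R' C' p' q' → PlanOn A R' C' p' q' := by
    intro R' C' p' q' hlt hh
    refine IH2 R' C' p' q' ?_ hh
    have e1 : (R'.filter (fun i => p' i ≠ 0)).card ≤ N :=
      le_trans (card_le_card (filter_subset _ _)) (hNcard R')
    have e2 : (C'.filter (fun j => q' j ≠ 0)).card ≤ M :=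
      le_trans (card_le_card (filter_subset _ _)) (hMcard C')
    have step1 : (R'.card + C'.card) * (N + M + 1) + (R'.filter (fun i => p' i ≠ 0)).card
        + (C'.filter (fun j => q' j ≠ 0)).card < (R'.card + C'.card + 1) * (N + M + 1) := by
      have : (R'.card + C'.card + 1) * (N + M + 1)
          = (R'.card + C'.card) * (N + M + 1) + (N + M + 1) := by ring
      omega
    have step2 : (R'.card + C'.card + 1) * (N + M + 1) ≤ (R.card + C.card) * (N + M + 1) :=
      Nat.mul_le_mul_right _ (by omega)
    omega
  by_cases hs : ∑ j ∈ C, q j = 0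
  · -- zero mass : the zero plan works
    have hq0 : ∀ j ∈ C, q j = 0 :=
      (Finset.sum_eq_zero_iff_of_nonneg (fun j _ => hq j)).1 hs
    have hp0 : ∀ i ∈ R, p i = 0 := by
      have : ∑ i ∈ R, p i = 0 := by rw [htot, hs]
      exact (Finset.sum_eq_zero_iff_of_nonneg (fun i _ => hp i)).1 this
    refine ⟨fun _ _ => 0, fun _ _ => le_refl 0, fun _ _ _ => rfl, fun _ _ _ => rfl,
      fun _ _ _ => rfl, ?_, ?_⟩
    · intro i hi; rw [Finset.sum_const_zero, hp0 i hi]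
    · intro j hj; rw [Finset.sum_const_zero, hq0 j hj]
  · have hspos : 0 < ∑ j ∈ C, q j :=
      lt_of_le_of_ne (Finset.sum_nonneg fun j _ => hq j) (Ne.symm hs)
    -- a column with positive demand
    have : ∃ j ∈ C, 0 < q j := by
      by_contra hcon
      push_neg at hcon
      exact hs (Finset.sum_eq_zero fun j hj => le_antisymm (hcon j hj) (hq j))
    obtain ⟨j₀, hj₀C, hqj₀⟩ := this
    -- a row in its mask with positive supply
    have : ∃ i ∈ A j₀ ∩ R, 0 < p i := by
      by_contra hcon
      push_neg at hcon
      have hzero : ∑ i ∈ A j₀ ∩ R, p i = 0 :=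
        Finset.sum_eq_zero fun i hi => le_antisymm (hcon i hi) (hp i)
      have hub := hL (A j₀ ∩ R) inter_subset_right
      have hlb : q j₀ ≤ ∑ j ∈ C.filter (fun j => A j ∩ R ⊆ A j₀ ∩ R), q j :=
        Finset.single_le_sum (fun j _ => hq j) (mem_filter.2 ⟨hj₀C, subset_rfl⟩)
      rw [hzero] at hub
      linarith
    obtain ⟨i₀, hi₀, hpi₀⟩ := this
    have hi₀A : i₀ ∈ A j₀ := (mem_inter.1 hi₀).1
    have hi₀R : i₀ ∈ R := (mem_inter.1 hi₀).2
    by_cases htightex : ∃ I, I ⊆ R ∧ I.Nonempty ∧ I ≠ R ∧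
        ∑ j ∈ C.filter (fun j => A j ∩ R ⊆ I), q j = ∑ i ∈ I, p i
    · obtain ⟨I, h1, h2, h3, h4⟩ := htightex
      exact split_lemma A R C p q h IH3 I h1 h2 h3 h4
    · -- no nontrivial tight set: route mass on (i₀, j₀)
      push_neg at htightex
      have hstrict : ∀ I, I ⊆ R → I.Nonempty → I ≠ R →
          ∑ j ∈ C.filter (fun j => A j ∩ R ⊆ I), q j < ∑ i ∈ I, p i := by
        intro I hI hIne hInR
        exact lt_of_le_of_ne (hL I hI) (htightex I hI hIne hInR)
      set slack : Finset (Fin N) → ℝ :=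
        fun I => ∑ i ∈ I, p i - ∑ j ∈ C.filter (fun j => A j ∩ R ⊆ I), q j with hslack
      set S : Finset (Finset (Fin N)) :=
        R.powerset.filter (fun I => i₀ ∈ I ∧ ¬ (A j₀ ∩ R ⊆ I)) with hSdef
      have hSmem : ∀ I, I ∈ S ↔ I ⊆ R ∧ i₀ ∈ I ∧ ¬ (A j₀ ∩ R ⊆ I) := by
        intro I; simp [hSdef, mem_filter, mem_powerset, and_assoc]
      set E : Finset ℝ := insert (p i₀) (insert (q j₀) (S.image slack)) with hEdef
      have hEne : E.Nonempty := insert_nonempty _ _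
      set t : ℝ := E.min' hEne with htdef
      have htp : t ≤ p i₀ := min'_le E _ (mem_insert_self _ _)
      have htq : t ≤ q j₀ := min'_le E _ (mem_insert.2 (Or.inr (mem_insert_self _ _)))
      have htslack : ∀ I ∈ S, t ≤ slack I := by
        intro I hI
        exact min'_le E _ (mem_insert.2 (Or.inr (mem_insert.2 (Or.inr
          (mem_image.2 ⟨I, hI, rfl⟩)))))
      have hSprop : ∀ I ∈ S, I.Nonempty ∧ I ≠ R ∧ I ⊆ R := by
        intro I hI
        rw [hSmem] at hI
        refine ⟨⟨i₀, hI.2.1⟩, ?_, hI.1⟩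
        rintro rfl
        exact hI.2.2 inter_subset_right
      have htpos : 0 < t := by
        rw [htdef]
        rw [Finset.lt_min'_iff]
        intro x hx
        rcases mem_insert.1 hx with rfl | hx
        · exact hpi₀
        rcases mem_insert.1 hx with rfl | hx
        · exact hqj₀
        rcases mem_image.1 hx with ⟨I, hI, rfl⟩
        obtain ⟨hne, hnR, hsub⟩ := hSprop I hI
        have := hstrict I hsub hne hnR
        simp only [hslack]
        linarith
      -- the reduced problem
      set p' : Fin N → ℝ := Function.update p i₀ (p i₀ - t) with hp'def
      set q' : Fin M → ℝ := Function.update q j₀ (q j₀ - t) with hq'def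
      have hp'i₀ : p' i₀ = p i₀ - t := Function.update_self _ _ _
      have hq'j₀ : q' j₀ = q j₀ - t := Function.update_self _ _ _
      have hp'ne : ∀ i, i ≠ i₀ → p' i = p i := fun i hi => Function.update_of_ne hi _ _
      have hq'ne : ∀ j, j ≠ j₀ → q' j = q j := fun j hj => Function.update_of_ne hj _ _
      have hp' : ∀ i, 0 ≤ p' i := by
        intro i
        by_cases hi : i = i₀
        · subst hi; rw [hp'i₀]; linarith
        · rw [hp'ne i hi]; exact hp i
      have hq' : ∀ j, 0 ≤ q' j := by
        intro j
        by_cases hj : j = j₀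
        · subst hj; rw [hq'j₀]; linarith
        · rw [hq'ne j hj]; exact hq j
      have hp'sum : ∀ (F : Finset (Fin N)), i₀ ∈ F → ∑ i ∈ F, p' i = (∑ i ∈ F, p i) - t := by
        intro F hF
        rw [hp'def, Finset.sum_update_of_mem hF]
        rw [← Finset.sum_erase_add F p hF, sdiff_singleton_eq_erase]
        ring
      have hp'sum2 : ∀ (F : Finset (Fin N)), i₀ ∉ F → ∑ i ∈ F, p' i = ∑ i ∈ F, p i := by
        intro F hF
        exact Finset.sum_congr rfl fun i hi => hp'ne i (fun hc => hF (hc ▸ hi))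
      have hq'sum : ∀ (F : Finset (Fin M)), j₀ ∈ F → ∑ j ∈ F, q' j = (∑ j ∈ F, q j) - t := by
        intro F hF
        rw [hq'def, Finset.sum_update_of_mem hF]
        rw [← Finset.sum_erase_add F q hF, sdiff_singleton_eq_erase]
        ring
      have hq'sum2 : ∀ (F : Finset (Fin M)), j₀ ∉ F → ∑ j ∈ F, q' j = ∑ j ∈ F, q j := by
        intro F hF
        exact Finset.sum_congr rfl fun j hj => hq'ne j (fun hc => hF (hc ▸ hj))
      have hL' : ∀ I ⊆ R, (∑ j ∈ C.filter (fun j => A j ∩ R ⊆ I), q' j) ≤ ∑ i ∈ I, p' i := by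
        intro I hI
        by_cases hiI : i₀ ∈ I
        · by_cases hsub : A j₀ ∩ R ⊆ I
          · have hjf : j₀ ∈ C.filter (fun j => A j ∩ R ⊆ I) := mem_filter.2 ⟨hj₀C, hsub⟩
            rw [hq'sum _ hjf, hp'sum _ hiI]
            have := hL I hI
            linarith
          · have hIS : I ∈ S := (hSmem I).2 ⟨hI, hiI, hsub⟩
            have hjf : j₀ ∉ C.filter (fun j => A j ∩ R ⊆ I) := by
              intro hc
              exact hsub (mem_filter.1 hc).2
            rw [hq'sum2 _ hjf, hp'sum _ hiI]
            have := htslack I hIS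
            simp only [hslack] at this
            linarith
        · have hjf : j₀ ∉ C.filter (fun j => A j ∩ R ⊆ I) := by
            intro hc
            exact hiI ((mem_filter.1 hc).2 hi₀)
          rw [hq'sum2 _ hjf, hp'sum2 _ hiI]
          exact hL I hI
      have htot' : ∑ i ∈ R, p' i = ∑ j ∈ C, q' j := by
        rw [hp'sum _ hi₀R, hq'sum _ hj₀C, htot]
      have hHyps' : Hyps A R C p' q' := ⟨hA, hp', hq', htot', hL'⟩
      -- lifting a plan for the reduced problem
      have hlift : PlanOn A R C p' q' → PlanOn A R C p q := by
        rintro ⟨T', hT'0, hT'A, hT'R, hT'C, hT'row, hT'col⟩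
        refine ⟨fun i j => T' i j + if i = i₀ ∧ j = j₀ then t else 0, ?_, ?_, ?_, ?_, ?_, ?_⟩
        · intro i j
          have : (0:ℝ) ≤ if i = i₀ ∧ j = j₀ then t else 0 := by
            split
            · exact le_of_lt htpos
            · exact le_refl 0
          exact add_nonneg (hT'0 i j) this
        · intro i j hij
          show T' i j + (if i = i₀ ∧ j = j₀ then t else 0) = 0
          rw [hT'A i j hij, if_neg, add_zero]
          rintro ⟨rfl, rfl⟩
          exact hij hi₀A
        · intro i j hij
          show T' i j + (if i = i₀ ∧ j = j₀ then t else 0) = 0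
          rw [hT'R i j hij, if_neg, add_zero]
          rintro ⟨rfl, rfl⟩
          exact hij hi₀R
        · intro i j hij
          show T' i j + (if i = i₀ ∧ j = j₀ then t else 0) = 0
          rw [hT'C i j hij, if_neg, add_zero]
          rintro ⟨rfl, rfl⟩
          exact hij hj₀C
        · intro i hi
          show ∑ j, (T' i j + if i = i₀ ∧ j = j₀ then t else 0) = p i
          rw [Finset.sum_add_distrib, hT'row i hi]
          by_cases hii : i = i₀
          · subst hii
            have hsum : ∑ j, (if i = i ∧ j = j₀ then t else 0) = t := by simp
            rw [hsum, hp'i₀]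
            ring
          · have hsum : ∑ j, (if i = i₀ ∧ j = j₀ then t else 0) = 0 := by simp [hii]
            rw [hsum, hp'ne i hii, add_zero]
        · intro j hj
          show ∑ i, (T' i j + if i = i₀ ∧ j = j₀ then t else 0) = q j
          rw [Finset.sum_add_distrib, hT'col j hj]
          by_cases hjj : j = j₀
          · subst hjj
            have hsum : ∑ i, (if i = i₀ ∧ j = j then t else 0) = t := by simp
            rw [hsum, hq'j₀]
            ring
          · have hsum : ∑ i, (if i = i₀ ∧ j = j₀ then t else 0) = 0 := by simp [hjj]
            rw [hsum, hq'ne j hjj, add_zero]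
      by_cases hkill : t = p i₀ ∨ t = q j₀
      · -- a row or column becomes empty : the count of nonzero entries drops
        apply hlift
        apply IH2 R C p' q' ?_ hHyps'
        have hsubp : R.filter (fun i => p' i ≠ 0) ⊆ R.filter (fun i => p i ≠ 0) := by
          intro i hi
          rcases mem_filter.1 hi with ⟨hiR, hne⟩
          refine mem_filter.2 ⟨hiR, ?_⟩
          by_cases hii : i = i₀
          · subst hii; exact ne_of_gt hpi₀
          · rw [hp'ne i hii] at hne; exact hne
        have hsubq : C.filter (fun j => q' j ≠ 0) ⊆ C.filter (fun j => q j ≠ 0) := by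
          intro j hj
          rcases mem_filter.1 hj with ⟨hjC, hne⟩
          refine mem_filter.2 ⟨hjC, ?_⟩
          by_cases hjj : j = j₀
          · subst hjj; exact ne_of_gt hqj₀
          · rw [hq'ne j hjj] at hne; exact hne
        have hstrictcard : (R.filter (fun i => p' i ≠ 0)).card + (C.filter (fun j => q' j ≠ 0)).card
            < (R.filter (fun i => p i ≠ 0)).card + (C.filter (fun j => q j ≠ 0)).card := by
          rcases hkill with hk | hk
          · have h1 : (R.filter (fun i => p' i ≠ 0)).card < (R.filter (fun i => p i ≠ 0)).card := by
              apply card_lt_card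
              rw [Finset.ssubset_iff_of_subset hsubp]
              refine ⟨i₀, mem_filter.2 ⟨hi₀R, ne_of_gt hpi₀⟩, fun hc => (mem_filter.1 hc).2 ?_⟩
              rw [hp'i₀, hk]; ring
            have h2 := card_le_card hsubq
            omega
          · have h1 : (C.filter (fun j => q' j ≠ 0)).card < (C.filter (fun j => q j ≠ 0)).card := by
              apply card_lt_card
              rw [Finset.ssubset_iff_of_subset hsubq]
              refine ⟨j₀, mem_filter.2 ⟨hj₀C, ne_of_gt hqj₀⟩, fun hc => (mem_filter.1 hc).2 ?_⟩
              rw [hq'j₀, hk]; ring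
            have h2 := card_le_card hsubp
            omega
        omega
      · -- a new tight set appears : split the residual problem
        push_neg at hkill
        have htmem : t ∈ E := Finset.min'_mem E hEne
        rcases mem_insert.1 htmem with hcase | hcase
        · exact absurd hcase hkill.1
        rcases mem_insert.1 hcase with hcase | hcase
        · exact absurd hcase hkill.2
        rcases mem_image.1 hcase with ⟨I₁, hI₁S, hI₁t⟩
        obtain ⟨hI₁ne, hI₁nR, hI₁R⟩ := hSprop I₁ hI₁S
        obtain ⟨_, hi₀I₁, hnsub⟩ := (hSmem I₁).1 hI₁S
        apply hlift
        have hjf : j₀ ∉ C.filter (fun j => A j ∩ R ⊆ I₁) := fun hc => hnsub (mem_filter.1 hc).2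
        have htight' : ∑ j ∈ C.filter (fun j => A j ∩ R ⊆ I₁), q' j = ∑ i ∈ I₁, p' i := by
          rw [hq'sum2 _ hjf, hp'sum _ hi₀I₁]
          simp only [hslack] at hI₁t
          linarith
        exact split_lemma A R C p' q' hHyps' IH3 I₁ hI₁R hI₁ne hI₁nR htight'

/-- A feasible masked transport plan exists iff the Hall-type inequalities
`∑_{j ∈ S(I)} q_j ≤ ∑_{i ∈ I} p_i ≤ ∑_{j ∈ N(I)} q_j` hold for all `I`. -/
theorem feasibility_of_MOT {N M : ℕ} (hN : 0 < N) (hM : 0 < M)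
    (p : Fin N → ℝ) (q : Fin M → ℝ) (A : Fin M → Finset (Fin N))
    (hp : ∀ i, 0 ≤ p i) (hq : ∀ j, 0 ≤ q j)
    (hpsum : ∑ i, p i = 1) (hqsum : ∑ j, q j = 1)
    (hA : ∀ j, (A j).Nonempty) :
    (∃ T : Fin N → Fin M → ℝ, IsFeasiblePlan p q A T) ↔
      ∀ I : Finset (Fin N),
        (∑ j ∈ univ.filter (fun j => A j ⊆ I), q j) ≤ (∑ i ∈ I, p i) ∧
          (∑ i ∈ I, p i) ≤ ∑ j ∈ univ.filter (fun j => (A j ∩ I).Nonempty), q j := by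
  constructor
  · rintro ⟨T, hT0, hTA, hTrow, hTcol⟩ I
    constructor
    · -- lower bound
      have h1 : ∀ j ∈ univ.filter (fun j => A j ⊆ I), q j = ∑ i ∈ I, T i j := by
        intro j hj
        rw [← hTcol j]
        refine (Finset.sum_subset (subset_univ I) ?_).symm
        intro i _ hiI
        exact hTA i j (fun hc => hiI ((mem_filter.1 hj).2 hc))
      rw [Finset.sum_congr rfl h1]
      have h2 : ∑ j ∈ univ.filter (fun j => A j ⊆ I), ∑ i ∈ I, T i j
          ≤ ∑ j : Fin M, ∑ i ∈ I, T i j := by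
        refine Finset.sum_le_sum_of_subset_of_nonneg (subset_univ _) ?_
        intro j _ _
        exact Finset.sum_nonneg fun i _ => hT0 i j
      refine h2.trans ?_
      rw [Finset.sum_comm]
      refine le_of_eq (Finset.sum_congr rfl ?_)
      intro i _
      exact hTrow i
    · -- upper bound
      have h1 : ∑ i ∈ I, p i = ∑ j : Fin M, ∑ i ∈ I, T i j := by
        rw [Finset.sum_comm]
        exact Finset.sum_congr rfl fun i _ => (hTrow i).symm
      rw [h1]
      have h2 : ∑ j : Fin M, ∑ i ∈ I, T i j
          = ∑ j ∈ univ.filter (fun j => (A j ∩ I).Nonempty), ∑ i ∈ I, T i j := by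
        refine (Finset.sum_subset (subset_univ _) ?_).symm
        intro j _ hj
        refine Finset.sum_eq_zero fun i hiI => ?_
        refine hTA i j fun hc => ?_
        exact hj (mem_filter.2 ⟨mem_univ j, ⟨i, mem_inter.2 ⟨hc, hiI⟩⟩⟩)
      rw [h2]
      refine Finset.sum_le_sum fun j _ => ?_
      rw [← hTcol j]
      exact Finset.sum_le_sum_of_subset_of_nonneg (subset_univ I) fun i _ _ => hT0 i j
  · intro hcond
    have hHyps : Hyps A univ univ p q := by
      refine ⟨fun j _ => by simpa using hA j, hp, hq, hpsum.trans hqsum.symm, ?_⟩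
      intro I _
      have hfe : (univ : Finset (Fin M)).filter (fun j => A j ∩ univ ⊆ I)
          = univ.filter (fun j => A j ⊆ I) := by
        simp
      rw [hfe]
      exact (hcond I).1
    obtain ⟨T, hT0, hTA, _, _, hTrow, hTcol⟩ := exists_plan_aux A
      (((univ : Finset (Fin N)).card + (univ : Finset (Fin M)).card) * (N + M + 1)
        + ((univ : Finset (Fin N)).filter (fun i => p i ≠ 0)).card
        + ((univ : Finset (Fin M)).filter (fun j => q j ≠ 0)).card)
      univ univ p q le_rfl hHyps
    exact ⟨T, hT0, hTA, fun i => hTrow i (mem_univ i), fun j => hTcol j (mem_univ j)⟩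
end

section
/- If for every subset I ⊆ {1,…,N} it holds that ∑_{j ∈ S(I)} q_j ≤ ∑_{i ∈ I} p_i ≤ ∑_{j ∈ N(I)} q_j, where N(I) = {j ∈ {1,…,M} : A_j ∩ I ≠ ∅} and S(I) = {j ∈ {1,…,M} : A_j ⊆ I}, then a feasible masked transport plan for (p, q, (A_j)) exists. -/
open Finset

/-- Layer-cake / dual inequality: under the lower Hall condition,
`∑ⱼ qⱼ · minᵢ∈Aⱼ u(i) ≤ ∑ᵢ pᵢ u(i)` for every `u`. -/
lemma hall_inf_le {N M : ℕ} (hN : 0 < N)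
    (p : Fin N → ℝ) (q : Fin M → ℝ) (A : Fin M → Finset (Fin N))
    (hq : ∀ j, 0 ≤ q j)
    (hpsum : ∑ i, p i = 1) (hqsum : ∑ j, q j = 1)
    (hA : ∀ j, (A j).Nonempty)
    (hhall : ∀ I : Finset (Fin N),
      (∑ j ∈ univ.filter (fun j => A j ⊆ I), q j) ≤ ∑ i ∈ I, p i)
    (u : Fin N → ℝ) :
    ∑ j, q j * (A j).inf' (hA j) u ≤ ∑ i, p i * u i := by
  classical
  suffices H : ∀ n : ℕ, ∀ u : Fin N → ℝ, ((univ : Finset (Fin N)).image u).card ≤ n →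
      ∑ j, q j * (A j).inf' (hA j) u ≤ ∑ i, p i * u i from H _ u le_rfl
  intro n
  induction n with
  | zero =>
    intro u hu
    have hne : ((univ : Finset (Fin N)).image u).Nonempty :=
      ⟨u ⟨0, hN⟩, mem_image_of_mem u (mem_univ _)⟩
    exact absurd (Finset.card_eq_zero.mp (Nat.le_zero.mp hu)) hne.ne_empty
  | succ n ih =>
    intro u hu
    set S := (univ : Finset (Fin N)).image u with hSdef
    have hSne : S.Nonempty := ⟨u ⟨0, hN⟩, mem_image_of_mem u (mem_univ _)⟩
    by_cases hcard : S.card ≤ n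
    · exact ih u hcard
    set c := S.min' hSne with hc
    have hmem : ∀ i, u i ∈ S := fun i => mem_image_of_mem u (mem_univ i)
    have hcle : ∀ i, c ≤ u i := fun i => S.min'_le _ (hmem i)
    by_cases h1 : S.card ≤ 1
    · -- `u` is constant
      have hconst : ∀ i, u i = c :=
        fun i => Finset.card_le_one.mp h1 (u i) (hmem i) c (S.min'_mem hSne)
      have hinf : ∀ j, (A j).inf' (hA j) u = c := by
        intro j
        obtain ⟨i0, hi0⟩ := hA j
        refine le_antisymm (le_trans (Finset.inf'_le u hi0) (le_of_eq (hconst i0)))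
          (Finset.le_inf' _ _ fun i _ => hcle i)
      refine le_of_eq ?_
      calc ∑ j, q j * (A j).inf' (hA j) u = ∑ j, q j * c := by simp only [hinf]
        _ = c := by rw [← Finset.sum_mul, hqsum, one_mul]
        _ = ∑ i, p i * c := by rw [← Finset.sum_mul, hpsum, one_mul]
        _ = ∑ i, p i * u i := by
            exact Finset.sum_congr rfl fun i _ => by rw [hconst i]
    · -- at least two distinct values
      have hS2 : 2 ≤ S.card := by omega
      set S' := S.erase c with hS'
      have hS'ne : S'.Nonempty := by
        rw [← Finset.card_pos, hS', Finset.card_erase_of_mem (S.min'_mem hSne)]; omega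
      set d := S'.min' hS'ne with hd
      have hdS' : d ∈ S' := S'.min'_mem hS'ne
      have hcd : c < d :=
        lt_of_le_of_ne (S.min'_le d (Finset.mem_of_mem_erase hdS'))
          (Ne.symm (Finset.ne_of_mem_erase hdS'))
      have hdle : ∀ i, u i ≠ c → d ≤ u i :=
        fun i hi => S'.min'_le _ (Finset.mem_erase.mpr ⟨hi, hmem i⟩)
      set u' : Fin N → ℝ := fun i => max (u i) d with hu'
      have hu'card : ((univ : Finset (Fin N)).image u').card ≤ n := by
        have hsub : (univ : Finset (Fin N)).image u' ⊆ S' := by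
          intro x hx
          obtain ⟨i, -, rfl⟩ := Finset.mem_image.mp hx
          by_cases hic : u i = c
          · simpa [hu', hic, max_eq_right hcd.le] using hdS'
          · have : u' i = u i := max_eq_left (hdle i hic)
            rw [this]
            exact Finset.mem_erase.mpr ⟨hic, hmem i⟩
        have := Finset.card_le_card hsub
        rw [hS', Finset.card_erase_of_mem (S.min'_mem hSne)] at this
        omega
      have IH := ih u' hu'card
      set I := (univ : Finset (Fin N)).filter (fun i => u i ≠ c) with hI
      have e1 : ∀ i, p i * u i = p i * u' i - (d - c) * (if u i = c then p i else 0) := by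
        intro i; by_cases hic : u i = c
        · simp only [hu', hic, max_eq_right hcd.le, if_pos]; ring
        · simp only [hu', max_eq_left (hdle i hic), if_neg hic]; ring
      have e2 : ∀ j, q j * (A j).inf' (hA j) u
          = q j * (A j).inf' (hA j) u' - (d - c) * (if A j ⊆ I then 0 else q j) := by
        intro j
        by_cases hAj : A j ⊆ I
        · have heq : (A j).inf' (hA j) u' = (A j).inf' (hA j) u := by
            apply Finset.inf'_congr _ rfl
            intro i hi
            exact max_eq_left (hdle i (Finset.mem_filter.mp (hAj hi)).2)
          rw [heq, if_pos hAj]; ring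
        · obtain ⟨i0, hi0, hic0⟩ : ∃ i ∈ A j, u i = c := by
            by_contra hcon; push_neg at hcon
            exact hAj fun i hi => Finset.mem_filter.mpr ⟨Finset.mem_univ _, hcon i hi⟩
          have hinfu : (A j).inf' (hA j) u = c :=
            le_antisymm (hic0 ▸ Finset.inf'_le u hi0) (Finset.le_inf' _ _ fun i _ => hcle i)
          have hinfu' : (A j).inf' (hA j) u' = d := by
            refine le_antisymm ?_ (Finset.le_inf' _ _ fun i _ => le_max_right _ _)
            have hval : u' i0 = d := by
              simp only [hu', hic0, max_eq_right hcd.le]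
            exact hval ▸ Finset.inf'_le u' hi0
          rw [hinfu, hinfu', if_neg hAj]; ring
      have hsum1 : ∑ i, p i * u i
          = (∑ i, p i * u' i) - (d - c) * ∑ i, (if u i = c then p i else 0) := by
        rw [Finset.mul_sum, ← Finset.sum_sub_distrib]
        exact Finset.sum_congr rfl fun i _ => e1 i
      have hsum2 : ∑ j, q j * (A j).inf' (hA j) u
          = (∑ j, q j * (A j).inf' (hA j) u') - (d - c) * ∑ j, (if A j ⊆ I then 0 else q j) := by
        rw [Finset.mul_sum, ← Finset.sum_sub_distrib]
        exact Finset.sum_congr rfl fun j _ => e2 j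
      have hPc : ∑ i, (if u i = c then p i else 0) = 1 - ∑ i ∈ I, p i := by
        have hfe : (univ : Finset (Fin N)).filter (fun i => u i = c) = univ \ I := by
          rw [hI, ← Finset.filter_not]
          simp only [not_not]
        rw [← Finset.sum_filter, hfe, Finset.sum_sdiff_eq_sub (Finset.filter_subset _ _), hpsum]
      have hQb : ∑ j, (if A j ⊆ I then 0 else q j)
          = 1 - ∑ j ∈ univ.filter (fun j => A j ⊆ I), q j := by
        have : ∀ j, (if A j ⊆ I then 0 else q j) = (if ¬ A j ⊆ I then q j else 0) := by
          intro j; by_cases hj : A j ⊆ I <;> simp [hj]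
        simp only [this]
        rw [← Finset.sum_filter, Finset.filter_not,
          Finset.sum_sdiff_eq_sub (Finset.filter_subset _ _), hqsum]
      have hHall := hhall I
      have hkey : ∑ i, (if u i = c then p i else 0) ≤ ∑ j, (if A j ⊆ I then 0 else q j) := by
        rw [hPc, hQb]; linarith
      have hmul : (d - c) * ∑ i, (if u i = c then p i else 0)
          ≤ (d - c) * ∑ j, (if A j ⊆ I then 0 else q j) :=
        mul_le_mul_of_nonneg_left hkey (by linarith)
      linarith [IH]

/-- Dual form with `sup'`, under the same lower Hall condition (applied to `-u`). -/
lemma hall_le_sup {N M : ℕ} (hN : 0 < N)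
    (p : Fin N → ℝ) (q : Fin M → ℝ) (A : Fin M → Finset (Fin N))
    (hq : ∀ j, 0 ≤ q j)
    (hpsum : ∑ i, p i = 1) (hqsum : ∑ j, q j = 1)
    (hA : ∀ j, (A j).Nonempty)
    (hhall : ∀ I : Finset (Fin N),
      (∑ j ∈ univ.filter (fun j => A j ⊆ I), q j) ≤ ∑ i ∈ I, p i)
    (u : Fin N → ℝ) :
    ∑ i, p i * u i ≤ ∑ j, q j * (A j).sup' (hA j) u := by
  have h := hall_inf_le hN p q A hq hpsum hqsum hA hhall (fun i => -u i)
  have hneg : ∀ j, (A j).inf' (hA j) (fun i => -u i) = -((A j).sup' (hA j) u) := by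
    intro j
    refine le_antisymm ?_ (Finset.le_inf' _ _ fun i hi => neg_le_neg (Finset.le_sup' u hi))
    obtain ⟨i0, hi0, hs⟩ := Finset.exists_mem_eq_sup' (hA j) u
    calc (A j).inf' (hA j) (fun i => -u i) ≤ -u i0 := Finset.inf'_le _ hi0
      _ = -((A j).sup' (hA j) u) := by rw [hs]
  simp only [hneg, mul_neg, Finset.sum_neg_distrib, neg_le_neg_iff] at h
  exact h

/-- If the Hall-type inequalities
`∑_{j ∈ S(I)} q_j ≤ ∑_{i ∈ I} p_i ≤ ∑_{j ∈ N(I)} q_j` hold for all `I`,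
then a feasible masked transport plan exists. -/
theorem feasible_of_hall {N M : ℕ} (hN : 0 < N) (hM : 0 < M)
    (p : Fin N → ℝ) (q : Fin M → ℝ) (A : Fin M → Finset (Fin N))
    (hp : ∀ i, 0 ≤ p i) (hq : ∀ j, 0 ≤ q j)
    (hpsum : ∑ i, p i = 1) (hqsum : ∑ j, q j = 1)
    (hA : ∀ j, (A j).Nonempty)
    (hhall : ∀ I : Finset (Fin N),
      (∑ j ∈ univ.filter (fun j => A j ⊆ I), q j) ≤ (∑ i ∈ I, p i) ∧
        (∑ i ∈ I, p i) ≤ ∑ j ∈ univ.filter (fun j => (A j ∩ I).Nonempty), q j) :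
    ∃ T : Fin N → Fin M → ℝ, IsFeasiblePlan p q A T := by
  classical
  set L : (Fin N × Fin M → ℝ) →ₗ[ℝ] ((Fin N ⊕ Fin M) → ℝ) :=
    { toFun := fun x => Sum.elim
        (fun i => ∑ j, (if i ∈ A j then (1:ℝ) else 0) * x (i, j))
        (fun j => ∑ i, (if i ∈ A j then (1:ℝ) else 0) * x (i, j))
      map_add' := by
        intro x y; funext k
        cases k <;> simp [mul_add, Finset.sum_add_distrib]
      map_smul' := by
        intro cc x; funext k
        cases k <;>
          simp only [Sum.elim_inl, Sum.elim_inr, Pi.smul_apply, smul_eq_mul,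
            RingHom.id_apply, Finset.mul_sum] <;>
          exact Finset.sum_congr rfl fun _ _ => by ring } with hL
  set b : (Fin N ⊕ Fin M) → ℝ := Sum.elim p q with hbdef
  set G : Set ((Fin N ⊕ Fin M) → ℝ) := L '' stdSimplex ℝ (Fin N × Fin M) with hG
  have hGb : b ∈ G := by
    by_contra hb
    have hGconv : Convex ℝ G := (convex_stdSimplex ℝ _).linear_image L
    have hGcomp : IsCompact G :=
      (isCompact_stdSimplex ℝ (Fin N × Fin M)).image L.continuous_of_finiteDimensional
    obtain ⟨φ, s, hGs, hsb⟩ := geometric_hahn_banach_closed_point hGconv hGcomp.isClosed hb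
    set u : Fin N → ℝ := fun i => φ (Pi.single (Sum.inl i) 1) with hu
    set v : Fin M → ℝ := fun j => φ (Pi.single (Sum.inr j) 1) with hv
    have hpoint : ∀ j, ∀ i ∈ A j, u i + v j < s := by
      intro j i hij
      have hmem : (Pi.single (i, j) 1 : Fin N × Fin M → ℝ) ∈ stdSimplex ℝ (Fin N × Fin M) := by
        constructor
        · intro k; rw [Pi.single_apply]; split <;> norm_num
        · simp [Pi.single_apply]
      have hLe : L (Pi.single (i, j) 1)
          = Pi.single (Sum.inl i) 1 + Pi.single (Sum.inr j) 1 := by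
        funext k
        cases k with
        | inl i' =>
          simp only [hL, LinearMap.coe_mk, AddHom.coe_mk, Sum.elim_inl, Pi.add_apply,
            Pi.single_apply, Prod.mk.injEq, reduceCtorEq, if_false, add_zero, Sum.inl.injEq]
          by_cases hii : i' = i
          · subst hii
            rw [Finset.sum_eq_single j]
            · simp [hij]
            · intro j' _ hj'
              simp [Prod.ext_iff, hj']
            · simp
          · rw [if_neg hii, Finset.sum_eq_zero]
            intro j' _
            simp [Prod.ext_iff, hii]
        | inr j' =>
          simp only [hL, LinearMap.coe_mk, AddHom.coe_mk, Sum.elim_inr, Pi.add_apply,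
            Pi.single_apply, Prod.mk.injEq, reduceCtorEq, if_false, zero_add, Sum.inr.injEq]
          by_cases hjj : j' = j
          · subst hjj
            rw [Finset.sum_eq_single i]
            · simp [hij]
            · intro i' _ hi'
              simp [Prod.ext_iff, hi']
            · simp
          · rw [if_neg hjj, Finset.sum_eq_zero]
            intro i' _
            simp [Prod.ext_iff, hjj]
      have hlt := hGs _ ⟨_, hmem, rfl⟩
      rw [hLe, map_add] at hlt
      exact hlt
    have hbφ : φ b = ∑ i, p i * u i + ∑ j, q j * v j := by
      have hbeq : b = (∑ i, p i • (Pi.single (Sum.inl i) 1 : (Fin N ⊕ Fin M) → ℝ))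
          + (∑ j, q j • (Pi.single (Sum.inr j) 1 : (Fin N ⊕ Fin M) → ℝ)) := by
        funext k
        cases k with
        | inl i =>
          simp [hbdef, Finset.sum_apply, Pi.single_apply, Finset.sum_ite_eq]
        | inr j =>
          simp [hbdef, Finset.sum_apply, Pi.single_apply, Finset.sum_ite_eq]
      rw [hbeq, map_add, map_sum, map_sum]
      simp [hu, hv, smul_eq_mul]
    obtain ⟨j0, hj0⟩ : ∃ j, (0:ℝ) < q j := by
      by_contra hcon; push_neg at hcon
      have : ∑ j, q j ≤ 0 := Finset.sum_nonpos fun j _ => hcon j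
      rw [hqsum] at this; linarith
    have hsupv : ∀ j, v j < s - (A j).sup' (hA j) u := by
      intro j
      obtain ⟨i0, hi0, hs0⟩ := Finset.exists_mem_eq_sup' (hA j) u
      have := hpoint j i0 hi0
      rw [hs0]; linarith
    have hkey := hall_le_sup hN p q A hq hpsum hqsum hA (fun I => (hhall I).1) u
    have h2 : ∑ j, q j * v j < ∑ j, q j * (s - (A j).sup' (hA j) u) := by
      apply Finset.sum_lt_sum
      · intro j _; exact mul_le_mul_of_nonneg_left (hsupv j).le (hq j)
      · exact ⟨j0, Finset.mem_univ _, mul_lt_mul_of_pos_left (hsupv j0) hj0⟩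
    have h3 : ∑ j, q j * (s - (A j).sup' (hA j) u)
        = s - ∑ j, q j * (A j).sup' (hA j) u := by
      simp only [mul_sub, Finset.sum_sub_distrib, ← Finset.sum_mul, hqsum, one_mul]
    linarith
  obtain ⟨x, hx, hLx⟩ := hGb
  refine ⟨fun i j => (if i ∈ A j then (1:ℝ) else 0) * x (i, j), ?_, ?_, ?_, ?_⟩
  · intro i j
    have h0 : (0:ℝ) ≤ (if i ∈ A j then (1:ℝ) else 0) := by split <;> norm_num
    exact mul_nonneg h0 (hx.1 _)
  · intro i j hij; simp [hij]
  · intro i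
    have := congrFun hLx (Sum.inl i)
    simpa [hL, hbdef] using this
  · intro j
    have := congrFun hLx (Sum.inr j)
    simpa [hL, hbdef] using this
end

section
/- Let T be a feasible masked transport plan for (p, q, (A_j)) and for each j with q_j > 0 define the normalized weights Y[i,j] = T[i,j] / q_j. Let H be a real inner product space, let θ_1, …, θ_N ∈ H and θ* ∈ H. Then ∑_{j : q_j > 0} q_j · ‖ ∑_{i ∈ A_j} Y[i,j] θ_i − θ* ‖² ≤ ∑_{i=1}^N p_i ‖θ_i − θ*‖². -/
open Finset

lemma convexOn_univ_norm_sq {H : Type*} [NormedAddCommGroup H] [InnerProductSpace ℝ H] :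
    ConvexOn ℝ Set.univ (fun x : H => ‖x‖ ^ 2) := by
  refine ⟨convex_univ, fun x _ y _ a b ha hb hab => ?_⟩
  have h1 : ‖a • x + b • y‖ ≤ a * ‖x‖ + b * ‖y‖ := by
    calc ‖a • x + b • y‖ ≤ ‖a • x‖ + ‖b • y‖ := norm_add_le _ _
      _ = a * ‖x‖ + b * ‖y‖ := by
          rw [norm_smul, norm_smul, Real.norm_of_nonneg ha, Real.norm_of_nonneg hb]
  have h2 : ‖a • x + b • y‖ ^ 2 ≤ (a * ‖x‖ + b * ‖y‖) ^ 2 :=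
    pow_le_pow_left₀ (norm_nonneg _) h1 2
  have hx := norm_nonneg x
  have hy := norm_nonneg y
  simp only [smul_eq_mul]
  nlinarith [sq_nonneg (‖x‖ - ‖y‖), mul_nonneg ha hb]

/-- Jensen for `‖·‖²` over a finite convex combination. -/
lemma norm_sq_sum_smul_le {H : Type*} [NormedAddCommGroup H] [InnerProductSpace ℝ H]
    {ι : Type*} (s : Finset ι) (w : ι → ℝ) (x : ι → H)
    (hw : ∀ i ∈ s, 0 ≤ w i) (hsum : ∑ i ∈ s, w i = 1) :
    ‖∑ i ∈ s, w i • x i‖ ^ 2 ≤ ∑ i ∈ s, w i * ‖x i‖ ^ 2 := by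
  have := convexOn_univ_norm_sq.map_sum_le (t := s) (w := w) (p := x) hw hsum
    (fun i _ => Set.mem_univ _)
  simpa [smul_eq_mul] using this

/-- Sample-to-model inequality: with normalized weights `Y i j = T i j / q j`,
`∑_{j : q_j > 0} q_j ‖∑_{i ∈ A_j} Y i j • θ i − θ*‖² ≤ ∑_i p_i ‖θ i − θ*‖²`. -/
theorem sample_to_model {N M : ℕ} (hN : 0 < N) (hM : 0 < M)
    (p : Fin N → ℝ) (q : Fin M → ℝ) (A : Fin M → Finset (Fin N))
    (hp : ∀ i, 0 ≤ p i) (hq : ∀ j, 0 ≤ q j)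
    (hpsum : ∑ i, p i = 1) (hqsum : ∑ j, q j = 1)
    (hA : ∀ j, (A j).Nonempty)
    (T : Fin N → Fin M → ℝ) (hT : IsFeasiblePlan p q A T)
    {H : Type*} [NormedAddCommGroup H] [InnerProductSpace ℝ H]
    (θ : Fin N → H) (θstar : H) :
    ∑ j ∈ univ.filter (fun j => 0 < q j),
        q j * ‖(∑ i ∈ A j, (T i j / q j) • θ i) - θstar‖ ^ 2 ≤
      ∑ i, p i * ‖θ i - θstar‖ ^ 2 := by
  obtain ⟨hTnn, hTmask, hTrow, hTcol⟩ := hT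
  set c : Fin N → ℝ := fun i => ‖θ i - θstar‖ ^ 2 with hc
  have hcnn : ∀ i, 0 ≤ c i := fun i => by positivity
  -- column sums restricted to A j
  have hcolA : ∀ j, ∑ i ∈ A j, T i j = q j := by
    intro j
    rw [← hTcol j]
    exact (Finset.sum_subset (Finset.subset_univ _)
      (fun i _ hi => hTmask i j hi))
  -- per-column bound
  have key : ∀ j ∈ univ.filter (fun j => 0 < q j),
      q j * ‖(∑ i ∈ A j, (T i j / q j) • θ i) - θstar‖ ^ 2 ≤ ∑ i ∈ A j, T i j * c i := by
    intro j hj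
    have hqj : 0 < q j := (Finset.mem_filter.mp hj).2
    have hwsum : ∑ i ∈ A j, T i j / q j = 1 := by
      rw [← Finset.sum_div, hcolA j, div_self hqj.ne']
    have hrw : (∑ i ∈ A j, (T i j / q j) • θ i) - θstar
        = ∑ i ∈ A j, (T i j / q j) • (θ i - θstar) := by
      simp only [smul_sub, Finset.sum_sub_distrib, ← Finset.sum_smul, hwsum, one_smul]
    rw [hrw]
    calc q j * ‖∑ i ∈ A j, (T i j / q j) • (θ i - θstar)‖ ^ 2
        ≤ q j * ∑ i ∈ A j, (T i j / q j) * c i := by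
          apply mul_le_mul_of_nonneg_left _ hqj.le
          exact norm_sq_sum_smul_le _ _ _
            (fun i _ => div_nonneg (hTnn i j) hqj.le) hwsum
      _ = ∑ i ∈ A j, T i j * c i := by
          rw [Finset.mul_sum]
          refine Finset.sum_congr rfl fun i _ => ?_
          field_simp
  calc ∑ j ∈ univ.filter (fun j => 0 < q j),
        q j * ‖(∑ i ∈ A j, (T i j / q j) • θ i) - θstar‖ ^ 2
      ≤ ∑ j ∈ univ.filter (fun j => 0 < q j), ∑ i ∈ A j, T i j * c i :=
        Finset.sum_le_sum key
    _ = ∑ j ∈ univ.filter (fun j => 0 < q j), ∑ i, T i j * c i := by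
        refine Finset.sum_congr rfl fun j _ => ?_
        refine Finset.sum_subset (Finset.subset_univ _) fun i _ hi => ?_
        rw [hTmask i j hi, zero_mul]
    _ = ∑ j, ∑ i, T i j * c i := by
        refine Finset.sum_subset (Finset.filter_subset _ _) fun j _ hj => ?_
        have hqj : q j = 0 := by
          by_contra h
          exact hj (Finset.mem_filter.mpr ⟨Finset.mem_univ _, lt_of_le_of_ne (hq j) (Ne.symm h)⟩)
        have hz : ∀ i, T i j = 0 := by
          intro i
          have hle : T i j ≤ ∑ i, T i j :=
            Finset.single_le_sum (fun i _ => hTnn i j) (Finset.mem_univ i)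
          have := hle.trans_eq (by rw [hTcol j, hqj])
          linarith [hTnn i j]
        simp [hz]
    _ = ∑ i, p i * ‖θ i - θstar‖ ^ 2 := by
        rw [Finset.sum_comm]
        refine Finset.sum_congr rfl fun i _ => ?_
        rw [← Finset.sum_mul, hTrow i]
end

section
/- Assume p_i > 0 for all i and q_j > 0 for all j, and assume a feasible masked transport plan for (p, q, (A_j)) exists. Let T^{(0)} ∈ ℝ^{N×M} satisfy T^{(0)}[i,j] > 0 for i ∈ A_j, T^{(0)}[i,j] = 0 for i ∉ A_j, and ∑_i T^{(0)}[i,j] = q_j for every j. Define the iterative proportional fitting (Sinkhorn) iteration: given T^{(t)}, set T̃[i,j] = (p_i / ∑_{j'} T^{(t)}[i,j']) · T^{(t)}[i,j] and T^{(t+1)}[i,j] = (q_j / ∑_{i'} T̃[i',j]) · T̃[i,j]. Then the sequence (T^{(t)}) converges (entrywise) to a limit T* which is a feasible masked transport plan for (p, q, (A_j)). -/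
open Finset

lemma gibbs_term_le {a b : ℝ} (ha : 0 ≤ a) (hb : 0 ≤ b) (hpos : a ≠ 0 → 0 < b) :
    a - b ≤ a * (Real.log a - Real.log b) := by
  rcases eq_or_lt_of_le ha with h | h
  · rw [← h]; simpa using hb
  · have hbpos : 0 < b := hpos h.ne'
    have hlog : Real.log (b / a) ≤ b / a - 1 := Real.log_le_sub_one_of_pos (div_pos hbpos h)
    rw [Real.log_div hbpos.ne' h.ne'] at hlog
    have hab : a * (b / a) = b := mul_div_cancel₀ _ h.ne'
    nlinarith [mul_le_mul_of_nonneg_left hlog h.le]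

lemma gibbs_nonneg {ι : Type*} [Fintype ι] (a b : ι → ℝ) (ha : ∀ x, 0 ≤ a x)
    (hb : ∀ x, 0 ≤ b x) (hpos : ∀ x, a x ≠ 0 → 0 < b x)
    (hsa : ∑ x, a x = 1) (hsb : ∑ x, b x ≤ 1) :
    0 ≤ ∑ x, a x * (Real.log (a x) - Real.log (b x)) := by
  have h1 : ∑ x, (a x - b x) ≤ ∑ x, a x * (Real.log (a x) - Real.log (b x)) :=
    Finset.sum_le_sum fun x _ => gibbs_term_le (ha x) (hb x) (hpos x)
  rw [Finset.sum_sub_distrib, hsa] at h1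
  linarith

lemma gibbs_eq {ι : Type*} [Fintype ι] (a b : ι → ℝ) (ha : ∀ x, 0 ≤ a x)
    (hb : ∀ x, 0 ≤ b x) (hpos : ∀ x, a x ≠ 0 → 0 < b x)
    (hsa : ∑ x, a x = 1) (hsb : ∑ x, b x = 1)
    (hkl : ∑ x, a x * (Real.log (a x) - Real.log (b x)) = 0) : a = b := by
  have key : ∀ x ∈ Finset.univ, a x * (Real.log (a x) - Real.log (b x)) - (a x - b x) = 0 := by
    rw [← Finset.sum_eq_zero_iff_of_nonneg]
    · rw [Finset.sum_sub_distrib, hkl, Finset.sum_sub_distrib, hsa, hsb]; ring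
    · intro x _
      have := gibbs_term_le (ha x) (hb x) (hpos x)
      linarith
  funext x
  have hx := key x (Finset.mem_univ x)
  rcases eq_or_lt_of_le (ha x) with h | h
  · rw [← h] at hx ⊢
    simp at hx
    linarith [hx]
  · have hbpos : 0 < b x := hpos x h.ne'
    by_contra hne
    have hne' : b x / a x ≠ 1 := by
      intro hh
      rw [div_eq_one_iff_eq h.ne'] at hh
      exact hne hh.symm
    have hlog : Real.log (b x / a x) < b x / a x - 1 :=
      Real.log_lt_sub_one_of_pos (div_pos hbpos h) hne'
    rw [Real.log_div hbpos.ne' h.ne'] at hlog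
    have hab : a x * (b x / a x) = b x := mul_div_cancel₀ _ h.ne'
    nlinarith [mul_lt_mul_of_pos_left hlog h]

/-- One iteration of the iterative proportional fitting (Sinkhorn) procedure:
first rescale rows to have sums `p`, then rescale columns to have sums `q`. -/
noncomputable def sinkhornStep {N M : ℕ} (p : Fin N → ℝ) (q : Fin M → ℝ)
    (T : Fin N → Fin M → ℝ) : Fin N → Fin M → ℝ :=
  let Ttil : Fin N → Fin M → ℝ := fun i j => (p i / ∑ j', T i j') * T i j
  fun i j => (q j / ∑ i', Ttil i' j) * Ttil i j

/-- Kullback-Leibler-type divergence between two matrices. -/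
noncomputable def klP {N M : ℕ} (F G : Fin N → Fin M → ℝ) : ℝ :=
  ∑ x : Fin N × Fin M, F x.1 x.2 * (Real.log (F x.1 x.2) - Real.log (G x.1 x.2))

/-- Convergence of IPFP (Sinkhorn scaling): if the masked transport problem is
feasible, the Sinkhorn iterates converge entrywise to a feasible masked
transport plan. -/
theorem sinkhorn_converges {N M : ℕ} (hN : 0 < N) (hM : 0 < M)
    (p : Fin N → ℝ) (q : Fin M → ℝ) (A : Fin M → Finset (Fin N))
    (hp : ∀ i, 0 < p i) (hq : ∀ j, 0 < q j)
    (hpsum : ∑ i, p i = 1) (hqsum : ∑ j, q j = 1)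
    (hA : ∀ j, (A j).Nonempty)
    (hfeas : ∃ T : Fin N → Fin M → ℝ, IsFeasiblePlan p q A T)
    (T0 : Fin N → Fin M → ℝ)
    (hT0pos : ∀ i j, i ∈ A j → 0 < T0 i j)
    (hT0mask : ∀ i j, i ∉ A j → T0 i j = 0)
    (hT0col : ∀ j, ∑ i, T0 i j = q j) :
    ∃ Tstar : Fin N → Fin M → ℝ, IsFeasiblePlan p q A Tstar ∧
      ∀ i j, Filter.Tendsto (fun t => (sinkhornStep p q)^[t] T0 i j)
        Filter.atTop (nhds (Tstar i j)) := by
  classical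
  obtain ⟨F, hFnn, hFmask, hFrow, hFcol⟩ := hfeas
  have hrowA : ∀ i, ∃ j, i ∈ A j := by
    intro i
    by_contra hcon
    push_neg at hcon
    have h0 : ∑ j, F i j = 0 := Finset.sum_eq_zero fun j _ => hFmask i j (hcon j)
    rw [hFrow i] at h0
    exact (hp i).ne' h0
  set T : ℕ → Fin N → Fin M → ℝ := fun t => (sinkhornStep p q)^[t] T0 with hTdef
  set r : ℕ → Fin N → ℝ := fun t i => ∑ j, T t i j with hrdef
  set Til : ℕ → Fin N → Fin M → ℝ := fun t i j => (p i / r t i) * T t i j with hTildef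
  set c : ℕ → Fin M → ℝ := fun t j => ∑ i, Til t i j with hcdef
  have hstepEq : ∀ t i j, T (t + 1) i j = (q j / c t j) * Til t i j := by
    intro t i j
    have h : T (t + 1) = sinkhornStep p q (T t) := Function.iterate_succ_apply' _ _ _
    rw [h]
    rfl
  -- basic invariants
  have hinv : ∀ t, (∀ i j, i ∉ A j → T t i j = 0) ∧ (∀ i j, i ∈ A j → 0 < T t i j) := by
    intro t
    induction t with
    | zero => exact ⟨hT0mask, hT0pos⟩
    | succ t ih =>
      obtain ⟨hm, hps⟩ := ih
      have hTnn : ∀ i j, 0 ≤ T t i j := by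
        intro i j
        by_cases hij : i ∈ A j
        · exact (hps i j hij).le
        · exact (hm i j hij).ge
      have hrpos : ∀ i, 0 < r t i := by
        intro i
        obtain ⟨j, hj⟩ := hrowA i
        exact Finset.sum_pos' (fun j' _ => hTnn i j') ⟨j, Finset.mem_univ j, hps i j hj⟩
      have hTilnn : ∀ i j, 0 ≤ Til t i j := fun i j =>
        mul_nonneg (div_nonneg (hp i).le (hrpos i).le) (hTnn i j)
      have hcpos : ∀ j, 0 < c t j := by
        intro j
        obtain ⟨i, hi⟩ := hA j
        exact Finset.sum_pos' (fun i' _ => hTilnn i' j)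
          ⟨i, Finset.mem_univ i, mul_pos (div_pos (hp i) (hrpos i)) (hps i j hi)⟩
      constructor
      · intro i j hij
        rw [hstepEq t i j, hTildef]
        simp [hm i j hij]
      · intro i j hij
        rw [hstepEq t i j]
        exact mul_pos (div_pos (hq j) (hcpos j))
          (mul_pos (div_pos (hp i) (hrpos i)) (hps i j hij))
  have hmaskT : ∀ t i j, i ∉ A j → T t i j = 0 := fun t => (hinv t).1
  have hposT : ∀ t i j, i ∈ A j → 0 < T t i j := fun t => (hinv t).2
  have hTnn : ∀ t i j, 0 ≤ T t i j := by
    intro t i j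
    by_cases hij : i ∈ A j
    · exact (hposT t i j hij).le
    · exact (hmaskT t i j hij).ge
  have hrpos : ∀ t i, 0 < r t i := by
    intro t i
    obtain ⟨j, hj⟩ := hrowA i
    exact Finset.sum_pos' (fun j' _ => hTnn t i j') ⟨j, Finset.mem_univ j, hposT t i j hj⟩
  have hTilnn : ∀ t i j, 0 ≤ Til t i j := fun t i j =>
    mul_nonneg (div_nonneg (hp i).le (hrpos t i).le) (hTnn t i j)
  have hcpos : ∀ t j, 0 < c t j := by
    intro t j
    obtain ⟨i, hi⟩ := hA j
    exact Finset.sum_pos' (fun i' _ => hTilnn t i' j)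
      ⟨i, Finset.mem_univ i, mul_pos (div_pos (hp i) (hrpos t i)) (hposT t i j hi)⟩
  -- column sums are q throughout
  have hcolT : ∀ t j, ∑ i, T t i j = q j := by
    intro t
    induction t with
    | zero => exact hT0col
    | succ t ih =>
      intro j
      have : ∑ i, T (t + 1) i j = ∑ i, (q j / c t j) * Til t i j :=
        Finset.sum_congr rfl fun i _ => hstepEq t i j
      rw [this, ← Finset.mul_sum]
      exact div_mul_cancel₀ (q j) (hcpos t j).ne'
  -- size bounds
  have hqle1 : ∀ j, q j ≤ 1 := by
    intro j
    rw [← hqsum]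
    exact Finset.single_le_sum (fun j' _ => (hq j').le) (Finset.mem_univ j)
  have hTle1 : ∀ t i j, T t i j ≤ 1 := by
    intro t i j
    calc T t i j ≤ ∑ i', T t i' j :=
          Finset.single_le_sum (fun i' _ => hTnn t i' j) (Finset.mem_univ i)
      _ = q j := hcolT t j
      _ ≤ 1 := hqle1 j
  have hrsum : ∀ t, ∑ i, r t i = 1 := by
    intro t
    calc ∑ i, r t i = ∑ j, ∑ i, T t i j := Finset.sum_comm
      _ = ∑ j, q j := Finset.sum_congr rfl fun j _ => hcolT t j
      _ = 1 := hqsum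
  have hTilrow : ∀ t i, ∑ j, Til t i j = p i := by
    intro t i
    rw [hTildef]
    simp only
    rw [← Finset.mul_sum]
    exact div_mul_cancel₀ (p i) (hrpos t i).ne'
  have hcsum : ∀ t, ∑ j, c t j = 1 := by
    intro t
    calc ∑ j, c t j = ∑ i, ∑ j, Til t i j := Finset.sum_comm
      _ = ∑ i, p i := Finset.sum_congr rfl fun i _ => hTilrow t i
      _ = 1 := hpsum
  have hrle1 : ∀ t i, r t i ≤ 1 := by
    intro t i
    rw [← hrsum t]
    exact Finset.single_le_sum (fun i' _ => (hrpos t i').le) (Finset.mem_univ i)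
  -- total sums of matrices
  have hsumT : ∀ t, ∑ x : Fin N × Fin M, T t x.1 x.2 = 1 := by
    intro t
    rw [Fintype.sum_prod_type_right']
    calc ∑ j, ∑ i, T t i j = ∑ j, q j := Finset.sum_congr rfl fun j _ => hcolT t j
      _ = 1 := hqsum
  have hsumG : ∀ G : Fin N → Fin M → ℝ, IsFeasiblePlan p q A G →
      ∑ x : Fin N × Fin M, G x.1 x.2 = 1 := by
    rintro G ⟨hGnn, hGmask, hGrow, hGcol⟩
    rw [Fintype.sum_prod_type_right']
    calc ∑ j, ∑ i, G i j = ∑ j, q j := Finset.sum_congr rfl fun j _ => hGcol j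
      _ = 1 := hqsum
  -- KL to the iterates is nonnegative for feasible plans
  have hklnn : ∀ (G : Fin N → Fin M → ℝ), IsFeasiblePlan p q A G → ∀ t,
      0 ≤ klP G (T t) := by
    intro G hG t
    obtain ⟨hGnn, hGmask, hGrow, hGcol⟩ := hG
    refine gibbs_nonneg (fun x : Fin N × Fin M => G x.1 x.2) (fun x : Fin N × Fin M => T t x.1 x.2)
      (fun x => hGnn x.1 x.2) (fun x => hTnn t x.1 x.2) ?_ (hsumG G ⟨hGnn, hGmask, hGrow, hGcol⟩)
      (le_of_eq (hsumT t))
    intro x hx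
    refine hposT t x.1 x.2 ?_
    by_contra hmem
    exact hx (hGmask x.1 x.2 hmem)
  -- telescoping identity
  have htel : ∀ (G : Fin N → Fin M → ℝ), IsFeasiblePlan p q A G → ∀ t,
      klP G (T t) - klP G (T (t + 1)) =
        (∑ i, p i * (Real.log (p i) - Real.log (r t i))) +
        (∑ j, q j * (Real.log (q j) - Real.log (c t j))) := by
    rintro G ⟨hGnn, hGmask, hGrow, hGcol⟩ t
    have hterm : ∀ i j,
        G i j * (Real.log (G i j) - Real.log (T t i j)) -
          G i j * (Real.log (G i j) - Real.log (T (t + 1) i j)) =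
        G i j * (Real.log (p i) - Real.log (r t i)) +
          G i j * (Real.log (q j) - Real.log (c t j)) := by
      intro i j
      by_cases hij : i ∈ A j
      · have hTpos := hposT t i j hij
        have h1 : T (t + 1) i j = q j / c t j * (p i / r t i * T t i j) := hstepEq t i j
        rw [h1, Real.log_mul (div_pos (hq j) (hcpos t j)).ne'
            (mul_pos (div_pos (hp i) (hrpos t i)) hTpos).ne',
          Real.log_mul (div_pos (hp i) (hrpos t i)).ne' hTpos.ne',
          Real.log_div (hq j).ne' (hcpos t j).ne',
          Real.log_div (hp i).ne' (hrpos t i).ne']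
        ring
      · rw [hGmask i j hij]
        ring
    calc klP G (T t) - klP G (T (t + 1))
        = ∑ x : Fin N × Fin M,
            (G x.1 x.2 * (Real.log (p x.1) - Real.log (r t x.1)) +
             G x.1 x.2 * (Real.log (q x.2) - Real.log (c t x.2))) := by
          rw [klP, klP, ← Finset.sum_sub_distrib]
          exact Finset.sum_congr rfl fun x _ => hterm x.1 x.2
      _ = (∑ i, p i * (Real.log (p i) - Real.log (r t i))) +
          (∑ j, q j * (Real.log (q j) - Real.log (c t j))) := by
          rw [Finset.sum_add_distrib]
          congr 1
          · rw [Fintype.sum_prod_type]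
            refine Finset.sum_congr rfl fun i _ => ?_
            show ∑ y, G i y * (Real.log (p i) - Real.log (r t i)) = _
            rw [← Finset.sum_mul, hGrow i, mul_comm]
          · rw [Fintype.sum_prod_type_right]
            refine Finset.sum_congr rfl fun j _ => ?_
            show ∑ x, G x j * (Real.log (q j) - Real.log (c t j)) = _
            rw [← Finset.sum_mul, hGcol j, mul_comm]
  set Row : ℕ → ℝ := fun t => ∑ i, p i * (Real.log (p i) - Real.log (r t i)) with hRowdef
  set Col : ℕ → ℝ := fun t => ∑ j, q j * (Real.log (q j) - Real.log (c t j)) with hColdef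
  have hRownn : ∀ t, 0 ≤ Row t :=
    fun t => gibbs_nonneg p (r t) (fun i => (hp i).le) (fun i => (hrpos t i).le)
      (fun i _ => hrpos t i) hpsum (le_of_eq (hrsum t))
  have hColnn : ∀ t, 0 ≤ Col t :=
    fun t => gibbs_nonneg q (c t) (fun j => (hq j).le) (fun j => (hcpos t j).le)
      (fun j _ => hcpos t j) hqsum (le_of_eq (hcsum t))
  -- monotonicity of KL along the iterates for any feasible plan
  have hklmono : ∀ (G : Fin N → Fin M → ℝ), IsFeasiblePlan p q A G →
      Antitone (fun t => klP G (T t)) := by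
    intro G hG
    refine antitone_nat_of_succ_le fun t => ?_
    have h := htel G hG t
    have := hRownn t
    have := hColnn t
    show klP G (T (t + 1)) ≤ klP G (T t)
    linarith
  have hFfeas : IsFeasiblePlan p q A F := ⟨hFnn, hFmask, hFrow, hFcol⟩
  -- the KL to F converges; its decrements Row + Col tend to zero
  have hconv : ∀ (G : Fin N → Fin M → ℝ), IsFeasiblePlan p q A G →
      Filter.Tendsto (fun t => klP G (T t)) Filter.atTop (nhds (⨅ t, klP G (T t))) := by
    intro G hG
    refine tendsto_atTop_ciInf (hklmono G hG) ⟨0, ?_⟩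
    rintro x ⟨t, rfl⟩
    exact hklnn G hG t
  have hdecr : Filter.Tendsto (fun t => Row t + Col t) Filter.atTop (nhds 0) := by
    have h1 := hconv F hFfeas
    have h2 : Filter.Tendsto (fun t => klP F (T (t + 1))) Filter.atTop
        (nhds (⨅ t, klP F (T t))) := h1.comp (Filter.tendsto_add_atTop_nat 1)
    have h3 := h1.sub h2
    rw [sub_self] at h3
    refine h3.congr fun t => ?_
    exact htel F hFfeas t
  have hRow0 : Filter.Tendsto Row Filter.atTop (nhds 0) := by
    refine squeeze_zero hRownn (fun t => ?_) hdecr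
    linarith [hColnn t]
  -- helper: log of a positive sequence tending to 0 tends to -infinity
  have hlogbot : ∀ (u : ℕ → ℝ), (∀ k, 0 < u k) → Filter.Tendsto u Filter.atTop (nhds 0) →
      Filter.Tendsto (fun k => Real.log (u k)) Filter.atTop Filter.atBot := by
    intro u hu hul
    exact Real.tendsto_log_nhdsNE_zero.comp
      (tendsto_nhdsWithin_iff.mpr ⟨hul, Filter.Eventually.of_forall fun k => (hu k).ne'⟩)
  -- helper: a sequence dominating a * (c0 - log (u k)) + C with u → 0 cannot tend to 0
  have hblow : ∀ (u g : ℕ → ℝ) (a c0 C : ℝ), 0 < a → (∀ k, 0 < u k) →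
      Filter.Tendsto u Filter.atTop (nhds 0) →
      (∀ k, a * (c0 - Real.log (u k)) + C ≤ g k) →
      ¬ Filter.Tendsto g Filter.atTop (nhds 0) := by
    intro u g a c0 C ha hu hul hle hg
    have h1 : Filter.Tendsto (fun k => -Real.log (u k)) Filter.atTop Filter.atTop :=
      Filter.tendsto_neg_atBot_atTop.comp (hlogbot u hu hul)
    have h2 : Filter.Tendsto (fun k => c0 + -Real.log (u k)) Filter.atTop Filter.atTop :=
      Filter.tendsto_atTop_add_const_left _ c0 h1
    have h3 : Filter.Tendsto (fun k => a * (c0 + -Real.log (u k))) Filter.atTop Filter.atTop :=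
      h2.const_mul_atTop ha
    have h4 : Filter.Tendsto (fun k => a * (c0 + -Real.log (u k)) + C) Filter.atTop
        Filter.atTop := Filter.tendsto_atTop_add_const_right _ C h3
    have h5 : Filter.Tendsto g Filter.atTop Filter.atTop := by
      refine Filter.tendsto_atTop_mono (fun k => ?_) h4
      have := hle k
      linarith [hle k]
    exact not_tendsto_atTop_of_tendsto_nhds hg h5
  -- any limit along a subsequence is a feasible plan
  have hkey : ∀ (φ : ℕ → ℕ), Filter.Tendsto φ Filter.atTop Filter.atTop →
      ∀ S : Fin N → Fin M → ℝ,
      (∀ i j, Filter.Tendsto (fun k => T (φ k) i j) Filter.atTop (nhds (S i j))) →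
      IsFeasiblePlan p q A S := by
    intro φ hφ S hent
    have hSnn : ∀ i j, 0 ≤ S i j := fun i j =>
      ge_of_tendsto' (hent i j) fun k => hTnn (φ k) i j
    have hSmask : ∀ i j, i ∉ A j → S i j = 0 := by
      intro i j hij
      have h0 : Filter.Tendsto (fun k => T (φ k) i j) Filter.atTop (nhds 0) := by
        refine Filter.Tendsto.congr (fun k => (hmaskT (φ k) i j hij).symm) tendsto_const_nhds
      exact tendsto_nhds_unique (hent i j) h0
    have hScol : ∀ j, ∑ i, S i j = q j := by
      intro j
      have h1 : Filter.Tendsto (fun k => ∑ i, T (φ k) i j) Filter.atTop (nhds (∑ i, S i j)) :=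
        tendsto_finset_sum _ fun i _ => hent i j
      have h2 : Filter.Tendsto (fun k => ∑ i, T (φ k) i j) Filter.atTop (nhds (q j)) := by
        refine Filter.Tendsto.congr (fun k => (hcolT (φ k) j).symm) tendsto_const_nhds
      exact tendsto_nhds_unique h1 h2
    have hrlim : ∀ i, Filter.Tendsto (fun k => r (φ k) i) Filter.atTop (nhds (∑ j, S i j)) :=
      fun i => tendsto_finset_sum _ fun j _ => hent i j
    have hRowφ : Filter.Tendsto (fun k => Row (φ k)) Filter.atTop (nhds 0) := hRow0.comp hφ
    have hrSpos : ∀ i, 0 < ∑ j, S i j := by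
      intro i0
      rcases eq_or_lt_of_le (Finset.sum_nonneg fun j _ => hSnn i0 j) with h0 | h0
      · exfalso
        have h0' : (∑ j, S i0 j) = 0 := h0.symm
        refine hblow (fun k => r (φ k) i0) (fun k => Row (φ k)) (p i0) (Real.log (p i0))
          (∑ i ∈ Finset.univ.erase i0, p i * Real.log (p i)) (hp i0)
          (fun k => hrpos (φ k) i0) (by have hh := hrlim i0; rw [h0'] at hh; exact hh) ?_ hRowφ
        intro k
        have hbound : ∀ i, p i * Real.log (p i) ≤ p i * (Real.log (p i) - Real.log (r (φ k) i)) := by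
          intro i
          have hlr : Real.log (r (φ k) i) ≤ 0 :=
            Real.log_nonpos (hrpos (φ k) i).le (hrle1 (φ k) i)
          nlinarith [hp i]
        calc p i0 * (Real.log (p i0) - Real.log (r (φ k) i0)) +
              ∑ i ∈ Finset.univ.erase i0, p i * Real.log (p i)
            ≤ p i0 * (Real.log (p i0) - Real.log (r (φ k) i0)) +
              ∑ i ∈ Finset.univ.erase i0, p i * (Real.log (p i) - Real.log (r (φ k) i)) := by
              exact add_le_add_right (Finset.sum_le_sum fun i _ => hbound i) _
          _ = Row (φ k) := by
              exact Finset.add_sum_erase Finset.univ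
                (fun i => p i * (Real.log (p i) - Real.log (r (φ k) i))) (Finset.mem_univ i0)
      · exact h0
    have hRowcont : Filter.Tendsto (fun k => Row (φ k)) Filter.atTop
        (nhds (∑ i, p i * (Real.log (p i) - Real.log (∑ j, S i j)))) := by
      refine tendsto_finset_sum _ fun i _ => ?_
      exact (tendsto_const_nhds.sub ((hrlim i).log (hrSpos i).ne')).const_mul _
    have hRowS : ∑ i, p i * (Real.log (p i) - Real.log (∑ j, S i j)) = 0 :=
      tendsto_nhds_unique hRowcont hRowφ
    have hrSsum : ∑ i, (∑ j, S i j) = 1 := by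
      rw [Finset.sum_comm]
      calc ∑ j, ∑ i, S i j = ∑ j, q j := Finset.sum_congr rfl fun j _ => hScol j
        _ = 1 := hqsum
    have hpeq : p = fun i => ∑ j, S i j :=
      gibbs_eq p (fun i => ∑ j, S i j) (fun i => (hp i).le) (fun i => (hrSpos i).le)
        (fun i _ => hrSpos i) hpsum hrSsum hRowS
    exact ⟨hSnn, hSmask, fun i => (congrFun hpeq i).symm, hScol⟩
  -- compactness of the cube
  have hKcomp : IsCompact {f : Fin N → Fin M → ℝ | ∀ i j, f i j ∈ Set.Icc (0:ℝ) 1} := by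
    have h1 : {f : Fin N → Fin M → ℝ | ∀ i j, f i j ∈ Set.Icc (0:ℝ) 1} =
        Set.univ.pi fun _ : Fin N => Set.univ.pi fun _ : Fin M => Set.Icc (0:ℝ) 1 := by
      ext f
      simp [Set.mem_pi, Pi.le_def, forall_and]
    rw [h1]
    exact isCompact_univ_pi fun _ => isCompact_univ_pi fun _ => isCompact_Icc
  have hmemK : ∀ t, T t ∈ {f : Fin N → Fin M → ℝ | ∀ i j, f i j ∈ Set.Icc (0:ℝ) 1} :=
    fun t i j => ⟨hTnn t i j, hTle1 t i j⟩
  have hentwise : ∀ (u : ℕ → Fin N → Fin M → ℝ) (S : Fin N → Fin M → ℝ),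
      Filter.Tendsto u Filter.atTop (nhds S) →
      ∀ i j, Filter.Tendsto (fun k => u k i j) Filter.atTop (nhds (S i j)) := by
    intro u S h i j
    exact tendsto_pi_nhds.mp (tendsto_pi_nhds.mp h i) j
  obtain ⟨S, hSK, φ, hφmono, hφlim⟩ := hKcomp.tendsto_subseq hmemK
  have hφat : Filter.Tendsto φ Filter.atTop Filter.atTop := hφmono.tendsto_atTop
  have hentS : ∀ i j, Filter.Tendsto (fun k => T (φ k) i j) Filter.atTop (nhds (S i j)) :=
    hentwise _ S hφlim
  have hSfeas : IsFeasiblePlan p q A S := hkey φ hφat S hentS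
  -- KL(S, T_t) tends to zero
  have hesub : Filter.Tendsto (fun k => klP S (T (φ k))) Filter.atTop (nhds 0) := by
    have hterm : ∀ x : Fin N × Fin M, Filter.Tendsto
        (fun k => S x.1 x.2 * (Real.log (S x.1 x.2) - Real.log (T (φ k) x.1 x.2)))
        Filter.atTop (nhds 0) := by
      intro x
      by_cases hx : S x.1 x.2 = 0
      · simp only [hx, zero_mul]
        exact tendsto_const_nhds
      · have h1 : Filter.Tendsto (fun k => Real.log (T (φ k) x.1 x.2)) Filter.atTop
            (nhds (Real.log (S x.1 x.2))) := (hentS x.1 x.2).log hx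
        have h2 := ((tendsto_const_nhds (x := Real.log (S x.1 x.2))).sub h1).const_mul (S x.1 x.2)
        simpa using h2
    have hh := tendsto_finset_sum Finset.univ (fun x (_ : x ∈ Finset.univ) => hterm x)
    simpa [klP] using hh
  have heconv := hconv S hSfeas
  have helim : Filter.Tendsto (fun t => klP S (T t)) Filter.atTop (nhds 0) := by
    have h1 : Filter.Tendsto (fun k => klP S (T (φ k))) Filter.atTop
        (nhds (⨅ t, klP S (T t))) := heconv.comp hφat
    have h2 : (⨅ t, klP S (T t)) = 0 := tendsto_nhds_unique h1 hesub
    rwa [h2] at heconv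
  -- the whole sequence converges to S
  refine ⟨S, hSfeas, ?_⟩
  have hTend : Filter.Tendsto T Filter.atTop (nhds S) := by
    refine Filter.tendsto_of_subseq_tendsto fun ns hns => ?_
    obtain ⟨S', hS'K, ψ, hψmono, hψlim⟩ := hKcomp.tendsto_subseq (fun n => hmemK (ns n))
    have hnsψ : Filter.Tendsto (fun m => ns (ψ m)) Filter.atTop Filter.atTop :=
      hns.comp hψmono.tendsto_atTop
    have hentS' : ∀ i j, Filter.Tendsto (fun m => T (ns (ψ m)) i j) Filter.atTop
        (nhds (S' i j)) := hentwise _ S' hψlim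
    have hS'feas : IsFeasiblePlan p q A S' := hkey _ hnsψ S' hentS'
    have he0 : Filter.Tendsto (fun m => klP S (T (ns (ψ m)))) Filter.atTop (nhds 0) :=
      helim.comp hnsψ
    obtain ⟨hSnn, hSmaskS, -, -⟩ := id hSfeas
    obtain ⟨hS'nn, -, -, -⟩ := id hS'feas
    have hbnd : ∀ m (x : Fin N × Fin M), S x.1 x.2 * Real.log (S x.1 x.2) ≤
        S x.1 x.2 * (Real.log (S x.1 x.2) - Real.log (T (ns (ψ m)) x.1 x.2)) := by
      intro m x
      rcases eq_or_lt_of_le (hSnn x.1 x.2) with h | h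
      · rw [← h]
        simp
      · have hlog : Real.log (T (ns (ψ m)) x.1 x.2) ≤ 0 :=
          Real.log_nonpos (hTnn _ _ _) (hTle1 _ _ _)
        nlinarith
    have hS'pos : ∀ x : Fin N × Fin M, S x.1 x.2 ≠ 0 → 0 < S' x.1 x.2 := by
      intro x0 hx0
      rcases eq_or_lt_of_le (hS'nn x0.1 x0.2) with h0 | h0
      · exfalso
        have hSpos : 0 < S x0.1 x0.2 := lt_of_le_of_ne (hSnn x0.1 x0.2) (Ne.symm hx0)
        have hmem0 : x0.1 ∈ A x0.2 := by
          by_contra hmem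
          exact hx0 (hSmaskS x0.1 x0.2 hmem)
        have h0' : S' x0.1 x0.2 = 0 := h0.symm
        refine hblow (fun m => T (ns (ψ m)) x0.1 x0.2) (fun m => klP S (T (ns (ψ m))))
          (S x0.1 x0.2) (Real.log (S x0.1 x0.2))
          (∑ x ∈ Finset.univ.erase x0, S x.1 x.2 * Real.log (S x.1 x.2)) hSpos
          (fun m => hposT _ x0.1 x0.2 hmem0)
          (by have hh := hentS' x0.1 x0.2; rw [h0'] at hh; exact hh) ?_ he0
        intro m
        calc S x0.1 x0.2 * (Real.log (S x0.1 x0.2) - Real.log (T (ns (ψ m)) x0.1 x0.2)) +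
              ∑ x ∈ Finset.univ.erase x0, S x.1 x.2 * Real.log (S x.1 x.2)
            ≤ S x0.1 x0.2 * (Real.log (S x0.1 x0.2) - Real.log (T (ns (ψ m)) x0.1 x0.2)) +
              ∑ x ∈ Finset.univ.erase x0,
                S x.1 x.2 * (Real.log (S x.1 x.2) - Real.log (T (ns (ψ m)) x.1 x.2)) :=
              add_le_add_right (Finset.sum_le_sum fun x _ => hbnd m x) _
          _ = klP S (T (ns (ψ m))) := by
              rw [klP]
              exact Finset.add_sum_erase Finset.univ
                (fun x => S x.1 x.2 *
                  (Real.log (S x.1 x.2) - Real.log (T (ns (ψ m)) x.1 x.2)))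
                (Finset.mem_univ x0)
      · exact h0
    have hcont2 : Filter.Tendsto (fun m => klP S (T (ns (ψ m)))) Filter.atTop
        (nhds (klP S S')) := by
      have hterm : ∀ x : Fin N × Fin M, Filter.Tendsto
          (fun m => S x.1 x.2 * (Real.log (S x.1 x.2) - Real.log (T (ns (ψ m)) x.1 x.2)))
          Filter.atTop
          (nhds (S x.1 x.2 * (Real.log (S x.1 x.2) - Real.log (S' x.1 x.2)))) := by
        intro x
        by_cases hx : S x.1 x.2 = 0
        · simp only [hx, zero_mul]
          exact tendsto_const_nhds
        · exact ((tendsto_const_nhds (x := Real.log (S x.1 x.2))).sub ((hentS' x.1 x.2).log (hS'pos x hx).ne')).const_mul _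
      have hh := tendsto_finset_sum Finset.univ (fun x (_ : x ∈ Finset.univ) => hterm x)
      simpa [klP] using hh
    have hklSS' : klP S S' = 0 := tendsto_nhds_unique hcont2 he0
    have heqfun := gibbs_eq (fun x : Fin N × Fin M => S x.1 x.2)
      (fun x : Fin N × Fin M => S' x.1 x.2) (fun x => hSnn x.1 x.2) (fun x => hS'nn x.1 x.2)
      hS'pos (hsumG S ⟨hSnn, hSmaskS, hSfeas.2.2.1, hSfeas.2.2.2⟩) (hsumG S' hS'feas)
      (by simpa [klP] using hklSS')
    have hSS' : S' = S := by
      funext i j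
      exact (congrFun heqfun (i, j)).symm
    exact ⟨ψ, by rw [← hSS']; exact hψlim⟩
  intro i j
  exact hentwise T S hTend i j
end
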